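/- If β ≥ 1 and n > 2, then the upper envelope of f over X ∩ W_{ij}, i.e. the convex hull of the hypograph {(x,z) ∈ (X ∩ W_{ij}) × ℝ : z ≤ f(x)}, equals H = {(x,z) ∈ ℝ₊ⁿ × ℝ : z − z₀ ≤ (γ ∏_{k=1}^n x_k^{a_k})^{1/β}, z ≤ u, p xᵢ ≤ x_j ≤ q xᵢ, and ∏_{k=1}^n x_k^{a_k} ≥ ℓ}. -/

import Mathlib

/-!
Write `f x = ∏ k, x k ^ a k` and `c = (u - ℓ) / (u ^ (1/β) - ℓ ^ (1/β))`, so that `γ = c ^ β` and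
`(γ f) ^ (1/β) = c f ^ (1/β)`; the line `z₀ + c s` passes through `(ℓ ^ (1/β), ℓ)` and
`(u ^ (1/β), u)`. Since `β ≥ 1`, the concave function `t ↦ z₀ + c t ^ (1/β)` lies above the
identity on `[ℓ, u]`, so the hypograph lies in `H`. The set `H` is convex because `f ^ (1/β)` is a
weighted geometric mean, hence concave, and `f` is log-concave.

Conversely, a point `(x, z)` of `H` with `f x ≤ u` lies on a segment between two points of the
hypograph over the ray through `x`, at the levels `f = ℓ` and `f = u`. If `f x > u`, pick
`k ∉ {i, j}`, which exists since `n > 2`, and move `x` by scaling coordinate `k` by `1 + t` and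
all the others by `1 - t`: this stays in `W_{ij}`, and `f` vanishes at `t = ± 1`, so by the
intermediate value theorem `(x, z)` lies on a segment between two points of the hypograph at
level `u`.
-/

open Real Finset

theorem add_smul_mem_convexHull {E : Type*} [AddCommGroup E] [Module ℝ E] {s : Set E}
    {x v : E} {t₁ t₂ : ℝ} (h₁ : t₁ ≤ 0) (h₂ : 0 ≤ t₂) (hs₁ : x + t₁ • v ∈ s)
    (hs₂ : x + t₂ • v ∈ s) : x ∈ convexHull ℝ s := by
  have hline : ∀ t : ℝ, AffineMap.lineMap x (x + v) t = x + t • v := fun t ↦ by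
    rw [AffineMap.lineMap_apply_module', add_sub_cancel_left, add_comm]
  refine segment_subset_convexHull hs₁ hs₂ ?_
  rw [← hline, ← hline, ← image_segment, segment_eq_Icc (h₁.trans h₂)]
  exact ⟨0, ⟨h₁, h₂⟩, by rw [hline, zero_smul, add_zero]⟩

theorem ConcaveOn.self_le_of_mem_Icc {s : Set ℝ} {g : ℝ → ℝ} (hg : ConcaveOn ℝ s g)
    {a b t : ℝ} (ha : a ∈ s) (hb : b ∈ s) (hga : a ≤ g a) (hgb : b ≤ g b) (ht : t ∈ Set.Icc a b) :
    t ≤ g t := by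
  rw [← segment_eq_Icc (ht.1.trans ht.2)] at ht
  obtain ⟨μ, ν, hμ, hν, hμν, rfl⟩ := ht
  calc μ • a + ν • b ≤ μ • g a + ν • g b := by gcongr
    _ ≤ g (μ • a + ν • b) := hg.2 ha hb hμ hν hμν

theorem rpow_mul_rpow_one_div {c y β : ℝ} (hc : 0 ≤ c) (hy : 0 ≤ y) (hβ : β ≠ 0) :
    (c ^ β * y) ^ (1 / β) = c * y ^ (1 / β) := by
  rw [mul_rpow (rpow_nonneg hc _) hy, ← rpow_mul hc, mul_one_div_cancel hβ, rpow_one]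

theorem rpow_one_div_rpow {x β : ℝ} (hx : 0 ≤ x) (hβ : β ≠ 0) : (x ^ (1 / β)) ^ β = x := by
  rw [one_div, rpow_inv_rpow hx hβ]

theorem Fintype.exists_ne_ne_of_two_lt_card {ι : Type*} [Fintype ι] (h : 2 < Fintype.card ι)
    (i j : ι) : ∃ k, k ≠ i ∧ k ≠ j := by
  classical
  obtain ⟨k, -, hk⟩ := exists_mem_notMem_of_card_lt_card
    ((card_le_two (a := i) (b := j)).trans_lt h)
  simp only [mem_insert, mem_singleton, not_or] at hk
  exact ⟨k, hk⟩

section WeightedProduct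

variable {ι : Type*} [Fintype ι] {a x y : ι → ℝ}

theorem prod_rpow_nonneg (hx : 0 ≤ x) : 0 ≤ ∏ k, x k ^ a k :=
  prod_nonneg fun k _ ↦ rpow_nonneg (hx k) _

theorem prod_rpow_le_prod_rpow (ha : 0 ≤ a) (hx : 0 ≤ x) (hxy : x ≤ y) :
    ∏ k, x k ^ a k ≤ ∏ k, y k ^ a k :=
  prod_le_prod (fun k _ ↦ rpow_nonneg (hx k) _) fun k _ ↦ rpow_le_rpow (hx k) (hxy k) (ha k)

theorem continuous_prod_rpow (ha : 0 ≤ a) : Continuous fun x : ι → ℝ ↦ ∏ k, x k ^ a k :=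
  continuous_finsetProd _ fun k _ ↦ (continuous_apply k).rpow_const fun _ ↦ Or.inr (ha k)

theorem prod_smul_rpow (ha : 0 ≤ a) (hx : 0 ≤ x) {s : ℝ} (hs : 0 ≤ s) :
    ∏ k, (s • x) k ^ a k = s ^ (∑ k, a k) * ∏ k, x k ^ a k := by
  simp only [Pi.smul_apply, smul_eq_mul, mul_rpow hs (hx _), prod_mul_distrib,
    rpow_sum_of_nonneg hs fun k _ ↦ ha k]

theorem prod_rpow_rpow_mul_prod_rpow_rpow_le (ha : 0 ≤ a) (hx : 0 ≤ x) (hy : 0 ≤ y)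
    {μ ν : ℝ} (hμ : 0 ≤ μ) (hν : 0 ≤ ν) (hμν : μ + ν = 1) :
    (∏ k, x k ^ a k) ^ μ * (∏ k, y k ^ a k) ^ ν ≤ ∏ k, (μ • x + ν • y) k ^ a k := by
  rw [← finsetProd_rpow _ _ (fun k _ ↦ rpow_nonneg (hx k) _),
    ← finsetProd_rpow _ _ (fun k _ ↦ rpow_nonneg (hy k) _), ← prod_mul_distrib]
  refine prod_le_prod (fun k _ ↦ mul_nonneg (rpow_nonneg (rpow_nonneg (hx k) _) _)
    (rpow_nonneg (rpow_nonneg (hy k) _) _)) fun k _ ↦ ?_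
  calc (x k ^ a k) ^ μ * (y k ^ a k) ^ ν = (x k ^ μ * y k ^ ν) ^ a k := by
        rw [mul_rpow (rpow_nonneg (hx k) _) (rpow_nonneg (hy k) _), ← rpow_mul (hx k),
          ← rpow_mul (hy k), ← rpow_mul (hx k), ← rpow_mul (hy k), mul_comm μ, mul_comm ν]
    _ ≤ (μ * x k + ν * y k) ^ a k :=
        rpow_le_rpow (mul_nonneg (rpow_nonneg (hx k) _) (rpow_nonneg (hy k) _))
          (geom_mean_le_arith_mean2_weighted hμ hν (hx k) (hy k) hμν) (ha k)

theorem prod_rpow_add_le_prod_rpow_add (ha : 0 ≤ a) (ha₁ : ∑ k, a k = 1) (hx : 0 ≤ x)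
    (hy : 0 ≤ y) : ∏ k, x k ^ a k + ∏ k, y k ^ a k ≤ ∏ k, (x + y) k ^ a k := by
  rcases (prod_rpow_nonneg (a := a) hx).eq_or_lt with hg | hg
  · rw [← hg, zero_add]
    exact prod_rpow_le_prod_rpow ha hy (le_add_of_nonneg_left hx)
  rcases (prod_rpow_nonneg (a := a) hy).eq_or_lt with hh | hh
  · rw [← hh, add_zero]
    exact prod_rpow_le_prod_rpow ha hx (le_add_of_nonneg_right hy)
  set g := ∏ k, x k ^ a k
  set h := ∏ k, y k ^ a k
  -- `x + y` is a convex combination of the rescalings of `x` and `y` to level `g + h`.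
  have hT : 0 < g + h := add_pos hg hh
  have key := prod_rpow_rpow_mul_prod_rpow_rpow_le ha
    (smul_nonneg (div_pos hT hg).le hx) (smul_nonneg (div_pos hT hh).le hy)
    (div_pos hg hT).le (div_pos hh hT).le (by field_simp)
  rw [prod_smul_rpow ha hx (div_pos hT hg).le, prod_smul_rpow ha hy (div_pos hT hh).le, ha₁,
    rpow_one, rpow_one, div_mul_cancel₀ _ hg.ne', div_mul_cancel₀ _ hh.ne', ← rpow_add hT,
    ← add_div, div_self hT.ne', rpow_one, smul_smul, smul_smul, div_mul_div_cancel₀ hT.ne',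
    div_mul_div_cancel₀ hT.ne', div_self hg.ne', div_self hh.ne', one_smul, one_smul] at key
  exact key

theorem concaveOn_prod_rpow (ha : 0 ≤ a) (ha₁ : ∑ k, a k = 1) :
    ConcaveOn ℝ (Set.Ici 0) fun x : ι → ℝ ↦ ∏ k, x k ^ a k := by
  refine ⟨convex_Ici 0, fun x hx y hy μ ν hμ hν _ ↦ ?_⟩
  have := prod_rpow_add_le_prod_rpow_add ha ha₁ (smul_nonneg hμ hx) (smul_nonneg hν hy)
  rwa [prod_smul_rpow ha hx hμ, prod_smul_rpow ha hy hν, ha₁, rpow_one, rpow_one] at this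

theorem concaveOn_prod_rpow_rpow_one_div (ha : 0 ≤ a) (hβ : 0 < ∑ k, a k) :
    ConcaveOn ℝ (Set.Ici 0) fun x : ι → ℝ ↦ (∏ k, x k ^ a k) ^ (1 / ∑ k, a k) := by
  refine (concaveOn_prod_rpow (a := fun k ↦ a k / ∑ k, a k) (fun k ↦ div_nonneg (ha k) hβ.le)
    (by rw [← sum_div, div_self hβ.ne'])).congr fun x hx ↦ ?_
  rw [← finsetProd_rpow _ _ fun k _ ↦ rpow_nonneg (hx k) _]
  simp only [← rpow_mul (hx _), mul_one_div]

end WeightedProduct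

section Envelope

variable {ι : Type*} [Fintype ι] {a : ι → ℝ} {ℓ u p q z₀ c β : ℝ} {i j : ι}

/-- `hyp(f, X ∩ W_{ij})` for `f x = ∏ k, x k ^ a k`. -/
def hypSet (a : ι → ℝ) (ℓ u p q : ℝ) (i j : ι) : Set ((ι → ℝ) × ℝ) :=
  {xz | ((∀ k, 0 ≤ xz.1 k) ∧ ℓ ≤ ∏ k, xz.1 k ^ a k ∧ (∏ k, xz.1 k ^ a k) ≤ u ∧
      p * xz.1 i ≤ xz.1 j ∧ xz.1 j ≤ q * xz.1 i) ∧ xz.2 ≤ ∏ k, xz.1 k ^ a k}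

/-- The set `H` of the theorem. -/
def envelopeSet (a : ι → ℝ) (ℓ u p q z₀ γ β : ℝ) (i j : ι) : Set ((ι → ℝ) × ℝ) :=
  {xz | (∀ k, 0 ≤ xz.1 k) ∧ xz.2 - z₀ ≤ (γ * ∏ k, xz.1 k ^ a k) ^ (1 / β) ∧ xz.2 ≤ u ∧
      p * xz.1 i ≤ xz.1 j ∧ xz.1 j ≤ q * xz.1 i ∧ ℓ ≤ ∏ k, xz.1 k ^ a k}

theorem mk_mem_hypSet {x y : ι → ℝ} {s z m : ℝ} (hy : 0 ≤ y) (hs : 0 ≤ s)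
    (hyi : y i = s * x i) (hyj : y j = s * x j) (hpx : p * x i ≤ x j) (hxq : x j ≤ q * x i)
    (hℓm : ℓ ≤ m) (hmu : m ≤ u) (hym : ∏ k, y k ^ a k = m) (hzm : z ≤ m) :
    (y, z) ∈ hypSet a ℓ u p q i j := by
  refine ⟨⟨hy, hym ▸ hℓm, hym ▸ hmu, ?_, ?_⟩, hym ▸ hzm⟩ <;> dsimp only
  · rw [hyi, hyj, mul_left_comm]
    exact mul_le_mul_of_nonneg_left hpx hs
  · rw [hyi, hyj, mul_left_comm]
    exact mul_le_mul_of_nonneg_left hxq hs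

theorem hypSet_subset_envelopeSet (hβ : 1 ≤ β) (hℓ : 0 ≤ ℓ) (hc : 0 ≤ c)
    (hL : z₀ + c * ℓ ^ (1 / β) = ℓ) (hU : z₀ + c * u ^ (1 / β) = u) :
    hypSet a ℓ u p q i j ⊆ envelopeSet a ℓ u p q z₀ (c ^ β) β i j := by
  rintro ⟨x, z⟩ ⟨⟨hx, hℓx, hxu, hpx, hxq⟩, hz⟩
  refine ⟨hx, ?_, hz.trans hxu, hpx, hxq, hℓx⟩
  have hchord : ConcaveOn ℝ (Set.Ici 0) fun t : ℝ ↦ c • t ^ (1 / β) + z₀ :=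
    ((concaveOn_rpow (by positivity) ((div_le_one (by positivity)).2 hβ)).smul hc).add_const z₀
  have := hchord.self_le_of_mem_Icc hℓ (hℓ.trans (hℓx.trans hxu))
    (by simp only [smul_eq_mul]; linarith) (by simp only [smul_eq_mul]; linarith) ⟨hℓx, hxu⟩
  rw [rpow_mul_rpow_one_div hc (prod_rpow_nonneg hx) (by positivity)]
  simp only [smul_eq_mul] at hz this ⊢
  linarith

theorem convex_envelopeSet (ha : 0 ≤ a) (hβ : β = ∑ k, a k) (hβ0 : 0 < β) (hℓ : 0 ≤ ℓ)
    (hc : 0 ≤ c) : Convex ℝ (envelopeSet a ℓ u p q z₀ (c ^ β) β i j) := by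
  subst hβ
  rintro ⟨x, z⟩ ⟨hx, hxz, hxu, hpx, hxq, hℓx⟩ ⟨y, w⟩ ⟨hy, hyw, hyu, hpy, hyq, hℓy⟩ μ ν hμ hν hμν
  dsimp only at hx hxz hxu hpx hxq hℓx hy hyw hyu hpy hyq hℓy
  have hxy : 0 ≤ μ • x + ν • y := add_nonneg (smul_nonneg hμ hx) (smul_nonneg hν hy)
  rw [rpow_mul_rpow_one_div hc (prod_rpow_nonneg hx) hβ0.ne'] at hxz
  rw [rpow_mul_rpow_one_div hc (prod_rpow_nonneg hy) hβ0.ne'] at hyw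
  simp only [Prod.smul_mk, Prod.mk_add_mk, smul_eq_mul]
  refine ⟨hxy, ?_, (convex_Iic u) hxu hyu hμ hν hμν, ?_, ?_, ?_⟩
  · have hG := (concaveOn_prod_rpow_rpow_one_div ha hβ0).2 hx hy hμ hν hμν
    rw [rpow_mul_rpow_one_div hc (prod_rpow_nonneg hxy) hβ0.ne']
    simp only [smul_eq_mul] at hG
    have hz₀ : μ * z₀ + ν * z₀ = z₀ := by rw [← add_mul, hμν, one_mul]
    linarith [mul_le_mul_of_nonneg_left hxz hμ, mul_le_mul_of_nonneg_left hyw hν,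
      mul_le_mul_of_nonneg_left hG hc]
  · simp only [Pi.add_apply, Pi.smul_apply, smul_eq_mul]
    nlinarith
  · simp only [Pi.add_apply, Pi.smul_apply, smul_eq_mul]
    nlinarith
  · calc ℓ = ℓ ^ μ * ℓ ^ ν := by rw [← rpow_add' hℓ (by simp [hμν]), hμν, rpow_one]
      _ ≤ (∏ k, x k ^ a k) ^ μ * (∏ k, y k ^ a k) ^ ν :=
        mul_le_mul (rpow_le_rpow hℓ hℓx hμ) (rpow_le_rpow hℓ hℓy hν) (rpow_nonneg hℓ _)
          (rpow_nonneg (prod_rpow_nonneg hx) _)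
      _ ≤ _ := prod_rpow_rpow_mul_prod_rpow_rpow_le ha hx hy hμ hν hμν

theorem mem_convexHull_hypSet_of_prod_rpow_le (ha : 0 ≤ a) (hβ : β = ∑ k, a k) (hβ0 : 0 < β)
    (hℓ : 0 < ℓ) (hℓu : ℓ ≤ u) (hc : 0 ≤ c) (hL : z₀ + c * ℓ ^ (1 / β) = ℓ)
    (hU : z₀ + c * u ^ (1 / β) = u) {xz : (ι → ℝ) × ℝ}
    (hxz : xz ∈ envelopeSet a ℓ u p q z₀ (c ^ β) β i j) (hxu : ∏ k, xz.1 k ^ a k ≤ u) :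
    xz ∈ convexHull ℝ (hypSet a ℓ u p q i j) := by
  obtain ⟨x, z⟩ := xz
  obtain ⟨hx, hz, -, hpx, hxq, hℓx⟩ := hxz
  have hPx : 0 < ∏ k, x k ^ a k := hℓ.trans_le hℓx
  rw [rpow_mul_rpow_one_div hc hPx.le hβ0.ne'] at hz
  set g := (∏ k, x k ^ a k) ^ (1 / β)
  have hg : 0 < g := rpow_pos_of_pos hPx _
  -- Slide `(x, z)` along `(x, c * g)`: the first component runs along the ray through `x` and
  -- reaches the levels `f = ℓ` and `f = u`, where the chord `z₀ + c * f ^ (1 / β)` equals `f`.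
  have hmem : ∀ m, ℓ ≤ m → m ≤ u → z₀ + c * m ^ (1 / β) = m →
      (x, z) + (m ^ (1 / β) / g - 1) • (x, c * g) ∈ hypSet a ℓ u p q i j := by
    intro m hℓm hmu hm
    have hs : 0 ≤ m ^ (1 / β) / g := div_nonneg (rpow_nonneg (hℓ.le.trans hℓm) _) hg.le
    rw [Prod.smul_mk, Prod.mk_add_mk, sub_smul, one_smul, add_sub_cancel]
    refine mk_mem_hypSet (smul_nonneg hs hx) hs rfl rfl hpx hxq hℓm hmu ?_ ?_
    · rw [prod_smul_rpow ha hx hs, ← hβ, div_rpow (rpow_nonneg (hℓ.le.trans hℓm) _) hg.le,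
        rpow_one_div_rpow (hℓ.le.trans hℓm) hβ0.ne', rpow_one_div_rpow hPx.le hβ0.ne',
        div_mul_cancel₀ _ hPx.ne']
    · have : (m ^ (1 / β) / g - 1) * (c * g) = c * m ^ (1 / β) - c * g := by field_simp
      rw [smul_eq_mul, this]
      linarith
  refine add_smul_mem_convexHull ?_ ?_ (hmem ℓ le_rfl hℓu hL) (hmem u hℓu le_rfl hU)
  · rw [sub_nonpos, div_le_one hg]
    exact rpow_le_rpow hℓ.le hℓx (by positivity)
  · rw [sub_nonneg, one_le_div hg]
    exact rpow_le_rpow hPx.le hxu (by positivity)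

theorem mem_convexHull_hypSet_of_le_prod_rpow (ha : ∀ k, 0 < a k) (hℓu : ℓ ≤ u) (hu : 0 ≤ u)
    {k : ι} (hki : k ≠ i) (hkj : k ≠ j) {γ : ℝ} {xz : (ι → ℝ) × ℝ}
    (hxz : xz ∈ envelopeSet a ℓ u p q z₀ γ β i j) (hux : u ≤ ∏ k, xz.1 k ^ a k) :
    xz ∈ convexHull ℝ (hypSet a ℓ u p q i j) := by
  classical
  obtain ⟨x, z⟩ := xz
  obtain ⟨hx, -, hzu, hpx, hxq, -⟩ := hxz
  set v : ι → ℝ := fun m ↦ if m = k then x m else -x m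
  have hv : ∀ (t : ℝ) m, (x + t • v) m = (if m = k then 1 + t else 1 - t) * x m := by
    intro t m
    simp only [v, Pi.add_apply, Pi.smul_apply, smul_eq_mul]
    split_ifs <;> ring
  set φ : ℝ → ℝ := fun t ↦ ∏ m, (x + t • v) m ^ a m
  have hφ : ContinuousOn φ (Set.Icc (-1) 1) :=
    ((continuous_prod_rpow fun m ↦ (ha m).le).comp (by fun_prop)).continuousOn
  have hφ0 : φ 0 = ∏ m, x m ^ a m := by simp [φ]
  have hφ_neg : φ (-1) = 0 :=
    prod_eq_zero (mem_univ k) (by rw [hv, if_pos rfl]; norm_num [(ha k).ne'])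
  have hφ_pos : φ 1 = 0 :=
    prod_eq_zero (mem_univ i) (by rw [hv, if_neg hki.symm]; norm_num [(ha i).ne'])
  have hmem : ∀ t ∈ Set.Icc (-1 : ℝ) 1, φ t = u →
      (x, z) + t • (v, (0 : ℝ)) ∈ hypSet a ℓ u p q i j := by
    rintro t ⟨ht₁, ht₂⟩ hφt
    rw [Prod.smul_mk, Prod.mk_add_mk, smul_zero, add_zero]
    refine mk_mem_hypSet (fun m ↦ ?_) (sub_nonneg.2 ht₂) ?_ ?_ hpx hxq hℓu le_rfl hφt hzu
    · rw [hv]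
      split_ifs <;> exact mul_nonneg (by linarith) (hx m)
    · rw [hv, if_neg hki.symm]
    · rw [hv, if_neg hkj.symm]
  obtain ⟨t₁, ht₁, hφt₁⟩ := intermediate_value_Icc (by norm_num : (-1 : ℝ) ≤ 0)
    (hφ.mono (Set.Icc_subset_Icc_right zero_le_one)) ⟨hφ_neg ▸ hu, hφ0 ▸ hux⟩
  obtain ⟨t₂, ht₂, hφt₂⟩ := intermediate_value_Icc' (by norm_num : (0 : ℝ) ≤ 1)
    (hφ.mono (Set.Icc_subset_Icc_left (by norm_num))) ⟨hφ_pos ▸ hu, hφ0 ▸ hux⟩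
  exact add_smul_mem_convexHull ht₁.2 ht₂.1 (hmem t₁ ⟨ht₁.1, ht₁.2.trans zero_le_one⟩ hφt₁)
    (hmem t₂ ⟨by linarith [ht₂.1], ht₂.2⟩ hφt₂)

end Envelope

theorem upper_envelope_eq_of_one_le_beta_general (n : ℕ) (hn : 2 < n) (a : Fin n → ℝ)
    (ha : ∀ k, 0 < a k) (ℓ u : ℝ) (hℓ : 0 < ℓ) (hℓu : ℓ < u)
    (i j : Fin n) (p q : ℝ)
    (β z₀ γ : ℝ) (hβ : β = ∑ k, a k) (hβ1 : 1 ≤ β)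
    (hz₀ : z₀ = (u ^ (1 / β) * ℓ - ℓ ^ (1 / β) * u) / (u ^ (1 / β) - ℓ ^ (1 / β)))
    (hγ : γ = ((u - ℓ) / (u ^ (1 / β) - ℓ ^ (1 / β))) ^ β) :
    convexHull ℝ
      {xz : (Fin n → ℝ) × ℝ |
        ((∀ k, 0 ≤ xz.1 k) ∧
          ℓ ≤ ∏ k, xz.1 k ^ a k ∧ (∏ k, xz.1 k ^ a k) ≤ u ∧
          p * xz.1 i ≤ xz.1 j ∧ xz.1 j ≤ q * xz.1 i) ∧
        xz.2 ≤ ∏ k, xz.1 k ^ a k} =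
    {xz : (Fin n → ℝ) × ℝ |
        (∀ k, 0 ≤ xz.1 k) ∧
        xz.2 - z₀ ≤ (γ * ∏ k, xz.1 k ^ a k) ^ (1 / β) ∧
        xz.2 ≤ u ∧
        p * xz.1 i ≤ xz.1 j ∧ xz.1 j ≤ q * xz.1 i ∧
        ℓ ≤ ∏ k, xz.1 k ^ a k} := by
  have hβ0 : 0 < β := one_pos.trans_le hβ1
  set L := ℓ ^ (1 / β)
  set U := u ^ (1 / β)
  have hLU : L < U := rpow_lt_rpow hℓ.le hℓu (by positivity)
  set c := (u - ℓ) / (U - L) with hc_def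
  have hc : 0 < c := div_pos (sub_pos.2 hℓu) (sub_pos.2 hLU)
  have hL : z₀ + c * L = ℓ := by
    rw [hz₀, hc_def]
    field_simp [(sub_pos.2 hLU).ne']
    ring
  have hU : z₀ + c * U = u := by
    rw [hz₀, hc_def]
    field_simp [(sub_pos.2 hLU).ne']
    ring
  obtain ⟨k, hki, hkj⟩ := Fintype.exists_ne_ne_of_two_lt_card (by simpa using hn) i j
  have ha' : 0 ≤ a := fun k ↦ (ha k).le
  subst hγ
  refine (convexHull_min (hypSet_subset_envelopeSet hβ1 hℓ.le hc.le hL hU)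
    (convex_envelopeSet ha' hβ hβ0 hℓ.le hc.le)).antisymm fun xz hxz ↦ ?_
  rcases le_or_gt (∏ k, xz.1 k ^ a k) u with hxu | hux
  · exact mem_convexHull_hypSet_of_prod_rpow_le ha' hβ hβ0 hℓ hℓu.le hc.le hL hU hxz hxu
  · exact mem_convexHull_hypSet_of_le_prod_rpow ha hℓu.le (hℓ.le.trans hℓu.le) hki hkj hxz hux.le

/-- For `β ≥ 1` and `n > 2`, the upper envelope of `f` over `X ∩ W_{ij}`
equals `H`. -/
theorem upper_envelope_eq_of_one_le_beta (n : ℕ) (hn : 2 < n) (a : Fin n → ℝ)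
    (ha : ∀ k, 0 < a k) (ℓ u : ℝ) (hℓ : 0 < ℓ) (hℓu : ℓ < u)
    (i j : Fin n) (hij : i ≠ j) (p q : ℝ) (hp : 0 < p) (hpq : p < q)
    (β z₀ γ : ℝ) (hβ : β = ∑ k, a k) (hβ1 : 1 ≤ β)
    (hz₀ : z₀ = (u ^ (1 / β) * ℓ - ℓ ^ (1 / β) * u) / (u ^ (1 / β) - ℓ ^ (1 / β)))
    (hγ : γ = ((u - ℓ) / (u ^ (1 / β) - ℓ ^ (1 / β))) ^ β) :
    convexHull ℝ
      {xz : (Fin n → ℝ) × ℝ |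
        ((∀ k, 0 ≤ xz.1 k) ∧
          ℓ ≤ ∏ k, xz.1 k ^ a k ∧ (∏ k, xz.1 k ^ a k) ≤ u ∧
          p * xz.1 i ≤ xz.1 j ∧ xz.1 j ≤ q * xz.1 i) ∧
        xz.2 ≤ ∏ k, xz.1 k ^ a k} =
    {xz : (Fin n → ℝ) × ℝ |
        (∀ k, 0 ≤ xz.1 k) ∧
        xz.2 - z₀ ≤ (γ * ∏ k, xz.1 k ^ a k) ^ (1 / β) ∧
        xz.2 ≤ u ∧
        p * xz.1 i ≤ xz.1 j ∧ xz.1 j ≤ q * xz.1 i ∧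
        ℓ ≤ ∏ k, xz.1 k ^ a k} :=
  upper_envelope_eq_of_one_le_beta_general n hn a ha ℓ u hℓ hℓu i j p q β z₀ γ hβ hβ1 hz₀ hγ
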